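/- Let G be a finite non-trivial Cpo-group. Then either |G| is a prime number, or there exist distinct primes p and q with p > q and q dividing p − 1 such that |G| = pq and the commutator subgroup G' of G has order p. -/

import Mathlib

/-- A group `G` is a Cpo-group if the centralizer of every non-trivial element
has prime order. -/
def IsCpoGroup (G : Type*) [Group G] : Prop :=
  ∀ x : G, x ≠ 1 → (Nat.card (Subgroup.centralizer ({x} : Set G))).Prime

/-!
In a Cpo-group every non-trivial element `x` generates its own centralizer, so it has prime
order, and a non-trivial `p`-subgroup lies in the centralizer of one of its central elements,
hence is cyclic. So `G` is a Z-group: `G'` and `G/G'` are cyclic and `G' < G`. If `G' = 1`, then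
`C_G(x) = G` has prime order. Otherwise `G' = ⟨x⟩` has prime order `p`, `G/G'` has prime order
`q` (a generator lifts to an element of prime order), and as `C_G(G') = C_G(x) = G'`,
conjugation embeds `G/G'` into `Aut(G')`, of order `p - 1`.
-/

open Subgroup

theorem MulAut.ker_conjNormal {G : Type*} [Group G] (N : Subgroup G) [N.Normal] :
    (MulAut.conjNormal : G →* MulAut N).ker = centralizer (N : Set G) := by
  ext g
  simp only [MonoidHom.mem_ker, MulEquiv.ext_iff, MulAut.conjNormal_apply, MulAut.one_apply,
    Subtype.ext_iff, mem_centralizer_iff, SetLike.mem_coe]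
  constructor
  · exact fun h n hn => (mul_inv_eq_iff_eq_mul.mp (h ⟨n, hn⟩)).symm
  · exact fun h n => mul_inv_eq_iff_eq_mul.mpr (h n n.2).symm

theorem Subgroup.card_quotient_centralizer_dvd_card_mulAut {G : Type*} [Group G]
    (N : Subgroup G) [N.Normal] :
    Nat.card (G ⧸ centralizer (N : Set G)) ∣ Nat.card (MulAut N) := by
  rw [← MulAut.ker_conjNormal, ← index, index_ker]
  exact card_subgroup_dvd_card _

namespace IsCpoGroup

variable {G : Type*} [Group G]

theorem zpowers_eq_centralizer (hG : IsCpoGroup G) {x : G} (hx : x ≠ 1) :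
    zpowers x = centralizer {x} := by
  have hprime := hG x hx
  have : Finite (centralizer {x}) := Nat.finite_of_card_ne_zero hprime.ne_zero
  have hle : zpowers x ≤ centralizer {x} :=
    zpowers_le.mpr (mem_centralizer_singleton_iff.mpr rfl)
  refine eq_of_le_of_card_ge hle ?_
  rcases hprime.eq_one_or_self_of_dvd _ (card_dvd_of_le hle) with h | h
  · rw [Nat.card_zpowers, orderOf_eq_one_iff] at h
    exact absurd h hx
  · exact h.ge

theorem orderOf_prime (hG : IsCpoGroup G) {x : G} (hx : x ≠ 1) : (orderOf x).Prime := by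
  rw [← Nat.card_zpowers, hG.zpowers_eq_centralizer hx]
  exact hG x hx

theorem card_prime_of_isCyclic (hG : IsCpoGroup G) {H : Subgroup G} [IsCyclic H] (hH : H ≠ ⊥) :
    (Nat.card H).Prime := by
  obtain ⟨x, rfl⟩ := (Subgroup.isCyclic_iff_exists_zpowers_eq_top H).mp inferInstance
  have hx : x ≠ 1 := by rintro rfl; exact hH zpowers_one_eq_bot
  rw [Nat.card_zpowers]
  exact hG.orderOf_prime hx

theorem centralizer_eq_self_of_isCyclic (hG : IsCpoGroup G) {H : Subgroup G} [IsCyclic H]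
    (hH : H ≠ ⊥) : centralizer (H : Set G) = H := by
  obtain ⟨x, rfl⟩ := (Subgroup.isCyclic_iff_exists_zpowers_eq_top H).mp inferInstance
  have hx : x ≠ 1 := by rintro rfl; exact hH zpowers_one_eq_bot
  rw [zpowers_eq_closure, centralizer_closure, ← zpowers_eq_closure,
    hG.zpowers_eq_centralizer hx]

theorem card_prime_of_commutator_eq_bot [Nontrivial G] (hG : IsCpoGroup G)
    (h : commutator G = ⊥) : (Nat.card G).Prime := by
  obtain ⟨x, hx⟩ := exists_ne (1 : G)
  have htop : centralizer {x} = ⊤ := by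
    rw [_root_.commutator_def, commutator_eq_bot_iff_le_centralizer] at h
    exact top_le_iff.mp (h.trans (centralizer_le (Set.subset_univ _)))
  simpa [htop] using hG x hx

theorem isCyclic_of_isPGroup (hG : IsCpoGroup G) {p : ℕ} [Fact p.Prime] {P : Subgroup G}
    [Finite P] (hP : IsPGroup p P) : IsCyclic P := by
  rcases P.bot_or_nontrivial with rfl | _
  · infer_instance
  have := hP.center_nontrivial
  obtain ⟨z, hz⟩ := exists_ne (1 : center P)
  have hz1 : ((z : P) : G) ≠ 1 := fun h => hz (Subtype.ext (Subtype.ext h))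
  have hle : P ≤ zpowers ((z : P) : G) := by
    rw [hG.zpowers_eq_centralizer hz1]
    intro s hs
    exact mem_centralizer_singleton_iff.mpr
      (congrArg Subtype.val (mem_center_iff.mp z.2 ⟨s, hs⟩))
  exact isCyclic_of_le hle

theorem isZGroup [Finite G] (hG : IsCpoGroup G) : IsZGroup G :=
  ⟨fun _ hp P => have := Fact.mk hp; hG.isCyclic_of_isPGroup P.isPGroup'⟩

theorem card_quotient_prime (hG : IsCpoGroup G) {N : Subgroup G} [N.Normal] [IsCyclic (G ⧸ N)]
    (hN : N ≠ ⊤) : (Nat.card (G ⧸ N)).Prime := by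
  obtain ⟨c, hc⟩ := IsCyclic.exists_generator (α := G ⧸ N)
  obtain ⟨g, rfl⟩ := QuotientGroup.mk_surjective c
  have hcard : orderOf (g : G ⧸ N) = Nat.card (G ⧸ N) :=
    orderOf_eq_card_of_forall_mem_zpowers hc
  have hne : Nat.card (G ⧸ N) ≠ 1 := by rwa [← index, Ne, index_eq_one]
  have hg : g ≠ 1 := by rintro rfl; exact hne (by rw [← hcard]; exact orderOf_one)
  rcases (hG.orderOf_prime hg).eq_one_or_self_of_dvd _
      (hcard ▸ orderOf_map_dvd (QuotientGroup.mk' N) g) with h | h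
  · exact absurd h hne
  · exact h ▸ hG.orderOf_prime hg

end IsCpoGroup

theorem stmt_11 (G : Type*) [Group G] [Finite G] (hG : IsCpoGroup G)
    (hnt : Nat.card G ≠ 1) :
    (Nat.card G).Prime ∨
      ∃ p q : ℕ, p.Prime ∧ q.Prime ∧ q < p ∧ q ∣ p - 1 ∧
        Nat.card G = p * q ∧ Nat.card (commutator G) = p := by
  have : Nontrivial G :=
    Finite.one_lt_card_iff_nontrivial.mp (lt_of_le_of_ne Nat.card_pos hnt.symm)
  have : IsZGroup G := hG.isZGroup
  by_cases hab : commutator G = ⊥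
  · exact Or.inl (hG.card_prime_of_commutator_eq_bot hab)
  have : IsCyclic (commutator G) := IsZGroup.isCyclic_commutator G
  have : IsCyclic (G ⧸ commutator G) := IsZGroup.isCyclic_abelianization
  have hp : (Nat.card (commutator G)).Prime := hG.card_prime_of_isCyclic hab
  have hq : (Nat.card (G ⧸ commutator G)).Prime :=
    hG.card_quotient_prime (IsZGroup.commutator_lt G).ne
  have hdvd : Nat.card (G ⧸ commutator G) ∣ Nat.card (commutator G) - 1 := by
    have := (commutator G).card_quotient_centralizer_dvd_card_mulAut
    rwa [hG.centralizer_eq_self_of_isCyclic hab, IsCyclic.card_mulAut,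
      Nat.totient_prime hp] at this
  refine Or.inr ⟨_, _, hp, hq, ?_, hdvd, ?_, rfl⟩
  · exact (Nat.le_of_dvd (Nat.sub_pos_of_lt hp.one_lt) hdvd).trans_lt
      (Nat.sub_one_lt hp.ne_zero)
  · rw [mul_comm]
    exact card_eq_card_quotient_mul_card_subgroup _
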